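/- Let γ ∈ ℝ, let D ∈ ℝ^{d×d} be symmetric positive semidefinite with D ≠ 0, and let Σ ∈ ℝ^{d×d} be symmetric positive definite. If γ I_d − D is positive definite, then S⋆ = γ² (γ I_d − D)^{-1} Σ (γ I_d − D)^{-1} is the unique maximizer of the function S ↦ ⟨D, S⟩ − γ·Tr(S − 2(Σ^{1/2} S Σ^{1/2})^{1/2}) over the set of symmetric positive semidefinite matrices S ∈ ℝ^{d×d}. -/

import Mathlib

open Matrix

-- `msqrt M` is the unique symmetric PSD square root of a symmetric PSD matrix `M` (else `0`).
open Classical in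
noncomputable def msqrt {ι : Type*} [Fintype ι] [DecidableEq ι] (M : Matrix ι ι ℝ) : Matrix ι ι ℝ :=
  if h : M.PosSemidef then
    (h.1.eigenvectorUnitary : Matrix ι ι ℝ) *
      diagonal ((RCLike.ofReal : ℝ → ℝ) ∘ Real.sqrt ∘ h.1.eigenvalues) *
      (star h.1.eigenvectorUnitary : Matrix ι ι ℝ) else 0

/-- The objective `S ↦ ⟨D, S⟩ − γ·Tr(S − 2(Σ^{1/2} S Σ^{1/2})^{1/2})`. -/
noncomputable def obj {d : ℕ} (γ : ℝ) (D Sg S : Matrix (Fin d) (Fin d) ℝ) : ℝ :=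
  (Dᵀ * S).trace - γ * (S - (2:ℝ) • msqrt (msqrt Sg * S * msqrt Sg)).trace

/-!
Write `R = Σ^{1/2}`, `A = γ I − D`, `B = R⁻¹ A R⁻¹ ≻ 0` and `T = (R S R)^{1/2}`. Since
`Tr(A S) = Tr(B T²)`, the objective equals `2γ Tr T − Tr(B T²)`, and completing the square gives
`2γ Tr T − Tr(B T²) = γ² Tr B⁻¹ − Tr((T − γB⁻¹) B (T − γB⁻¹))`. The last trace is nonnegative and
vanishes only at `T = γ B⁻¹`. As `D ⪰ 0` forces `γ > 0`, this `T` is positive semidefinite and is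
the square root of `R S⋆ R`; finally `S ↦ R S R` is injective.
-/

section MatrixSqrt

open scoped MatrixOrder

variable {n : Type*} [Fintype n] [DecidableEq n] {M : Matrix n n ℝ}

lemma msqrt_eq_cfcSqrt (hM : M.PosSemidef) : msqrt M = CFC.sqrt M := by
  rw [CFC.sqrt_eq_real_sqrt M hM.nonneg, cfcₙ_eq_cfc, hM.1.cfc_eq, msqrt, dif_pos hM]
  rfl

lemma posSemidef_msqrt (hM : M.PosSemidef) : (msqrt M).PosSemidef := by
  rw [msqrt_eq_cfcSqrt hM]
  exact (CFC.sqrt_nonneg M).posSemidef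

lemma msqrt_mul_self (hM : M.PosSemidef) : msqrt M * msqrt M = M := by
  rw [msqrt_eq_cfcSqrt hM]
  exact CFC.sqrt_mul_sqrt_self M hM.nonneg

lemma msqrt_mul_self_eq (hM : M.PosSemidef) : msqrt (M * M) = M := by
  have hMM : (M * M).PosSemidef := by
    simpa only [hM.1.eq] using posSemidef_conjTranspose_mul_self M
  rw [msqrt_eq_cfcSqrt hMM]
  exact CFC.sqrt_unique rfl hM.nonneg

lemma isUnit_msqrt (hM : M.PosDef) : IsUnit (msqrt M) := by
  rw [msqrt_eq_cfcSqrt hM.posSemidef, CFC.isUnit_sqrt_iff M hM.posSemidef.nonneg]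
  exact hM.isUnit

end MatrixSqrt

section TraceQuadratic

variable {n : Type*} [Fintype n] [DecidableEq n]

lemma trace_sub_smul_inv_mul_mul_sub {α : Type*} [CommRing α] {B : Matrix n n α}
    (hB : IsUnit B.det) (T : Matrix n n α) (c : α) :
    ((T - c • B⁻¹) * B * (T - c • B⁻¹)).trace =
      (B * (T * T)).trace - 2 * c * T.trace + c ^ 2 * B⁻¹.trace := by
  have hBB : B⁻¹ * B = 1 := nonsing_inv_mul B hB
  have hexpand : (T - c • B⁻¹) * B * (T - c • B⁻¹) =
      T * B * T - c • T - c • T + c ^ 2 • B⁻¹ := by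
    simp only [Matrix.sub_mul, Matrix.mul_sub, smul_mul_assoc, mul_smul_comm, Matrix.mul_assoc,
      mul_nonsing_inv B hB, hBB, Matrix.mul_one, Matrix.one_mul]
    module
  have hcycle : (T * B * T).trace = (B * (T * T)).trace := by
    rw [Matrix.mul_assoc, trace_mul_comm, Matrix.mul_assoc]
  rw [hexpand, trace_add, trace_sub, trace_sub, trace_smul, trace_smul, hcycle, smul_eq_mul,
    smul_eq_mul]
  ring

variable {B : Matrix n n ℝ}

lemma Matrix.PosDef.trace_conjTranspose_mul_mul_eq_zero_iff (hB : B.PosDef)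
    {X : Matrix n n ℝ} : (Xᴴ * B * X).trace = 0 ↔ X = 0 := by
  have hP := posSemidef_msqrt hB.posSemidef
  have hXBX : Xᴴ * B * X = (msqrt B * X)ᴴ * (msqrt B * X) := by
    conv_lhs => rw [← msqrt_mul_self hB.posSemidef]
    rw [conjTranspose_mul, hP.1.eq]
    simp only [Matrix.mul_assoc]
  rw [hXBX, trace_conjTranspose_mul_self_eq_zero_iff, (isUnit_msqrt hB).mul_right_eq_zero]

lemma Matrix.PosDef.two_mul_trace_sub_trace_mul_mul_self_le (hB : B.PosDef)
    {T : Matrix n n ℝ} (hT : T.IsHermitian) (c : ℝ) :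
    2 * c * T.trace - (B * (T * T)).trace ≤ c ^ 2 * B⁻¹.trace := by
  have hX : (T - c • B⁻¹).IsHermitian := hT.sub (hB.inv.1.smul (.all c))
  have := (hB.posSemidef.conjTranspose_mul_mul_same (T - c • B⁻¹)).trace_nonneg
  rw [hX.eq, trace_sub_smul_inv_mul_mul_sub hB.det_pos.ne'.isUnit] at this
  linarith

lemma Matrix.PosDef.two_mul_trace_sub_trace_mul_mul_self_eq_iff (hB : B.PosDef)
    {T : Matrix n n ℝ} (hT : T.IsHermitian) (c : ℝ) :
    2 * c * T.trace - (B * (T * T)).trace = c ^ 2 * B⁻¹.trace ↔ T = c • B⁻¹ := by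
  have hX : (T - c • B⁻¹).IsHermitian := hT.sub (hB.inv.1.smul (.all c))
  rw [← sub_eq_zero (a := T), ← hB.trace_conjTranspose_mul_mul_eq_zero_iff, hX.eq,
    trace_sub_smul_inv_mul_mul_sub hB.det_pos.ne'.isUnit]
  constructor <;> intro h <;> linarith

end TraceQuadratic

lemma pos_of_posDef_smul_one_sub {n : Type*} [DecidableEq n] [Nonempty n] {γ : ℝ}
    {D : Matrix n n ℝ} (hD : D.PosSemidef) (hA : (γ • 1 - D).PosDef) : 0 < γ := by
  obtain ⟨i⟩ := ‹Nonempty n›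
  have hAii := hA.diag_pos (i := i)
  have hDii := hD.diag_nonneg (i := i)
  simp only [Matrix.sub_apply, Matrix.smul_apply, one_apply_eq, smul_eq_mul, mul_one] at hAii
  linarith

lemma Matrix.PosSemidef.mul_mul_of_isHermitian {n : Type*} [Fintype n] {R S : Matrix n n ℝ}
    (hS : S.PosSemidef) (hR : R.IsHermitian) : (R * S * R).PosSemidef := by
  simpa only [hR.eq] using hS.mul_mul_conjTranspose_same R

section Conjugation

variable {n : Type*} [Fintype n] [DecidableEq n] {γ : ℝ} {A R : Matrix n n ℝ}

lemma trace_mul_eq_trace_conj_mul_conj (hR : IsUnit R.det) (S : Matrix n n ℝ) :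
    (A * S).trace = (R⁻¹ * A * R⁻¹ * (R * S * R)).trace := by
  rw [show R⁻¹ * A * R⁻¹ * (R * S * R) = R⁻¹ * (A * S * R) by
    simp only [Matrix.mul_assoc, nonsing_inv_mul_cancel_left _ _ hR], trace_mul_comm R⁻¹,
    mul_nonsing_inv_cancel_right _ _ hR]

lemma Matrix.PosDef.conj_nonsing_inv (hA : A.PosDef) (hR : R.IsHermitian)
    (hRu : IsUnit R.det) : (R⁻¹ * A * R⁻¹).PosDef := by
  have hinj : Function.Injective R⁻¹.mulVec := mulVec_injective_iff_isUnit.mpr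
    ((isUnit_iff_isUnit_det _).mpr (isUnit_nonsing_inv_det R hRu))
  simpa only [hR.inv.eq] using hA.conjTranspose_mul_mul_same hinj

lemma msqrt_conj_mul_inv_mul_inv (hγ : 0 ≤ γ) (hA : A.PosDef) (hR : R.PosSemidef)
    (hRu : IsUnit R.det) :
    msqrt (R * (γ ^ 2 • (A⁻¹ * (R * R) * A⁻¹)) * R) = γ • (R⁻¹ * A * R⁻¹)⁻¹ := by
  have hinv : (R⁻¹ * A * R⁻¹)⁻¹ = R * A⁻¹ * R := by
    rw [Matrix.mul_inv_rev, Matrix.mul_inv_rev, nonsing_inv_nonsing_inv R hRu, Matrix.mul_assoc]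
  have hC : (γ • (R * A⁻¹ * R)).PosSemidef := by
    simpa only [mul_smul_comm, smul_mul_assoc] using
      (hA.inv.posSemidef.smul hγ).mul_mul_of_isHermitian hR.1
  rw [hinv, ← msqrt_mul_self_eq hC, smul_mul_smul_comm, sq γ, mul_smul_comm, smul_mul_assoc]
  simp only [Matrix.mul_assoc]

end Conjugation

lemma obj_eq_two_mul_trace_msqrt_sub {d : ℕ} {γ : ℝ} {D : Matrix (Fin d) (Fin d) ℝ}
    (hD : D.IsHermitian) (Sg S : Matrix (Fin d) (Fin d) ℝ) :
    obj γ D Sg S = 2 * γ * (msqrt (msqrt Sg * S * msqrt Sg)).trace -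
      ((γ • 1 - D) * S).trace := by
  rw [obj, ← conjTranspose_eq_transpose_of_trivial, hD.eq, trace_sub, trace_smul, Matrix.sub_mul,
    trace_sub, smul_mul_assoc, Matrix.one_mul, trace_smul, smul_eq_mul, smul_eq_mul]
  ring

theorem stmt1_general {d : ℕ} (γ : ℝ) (D Sg : Matrix (Fin d) (Fin d) ℝ)
    (hD : D.PosSemidef) (hSg : Sg.PosDef)
    (hγ : (γ • (1 : Matrix (Fin d) (Fin d) ℝ) - D).PosDef) :
    (γ ^ 2 • ((γ • (1 : Matrix (Fin d) (Fin d) ℝ) - D)⁻¹ * Sg *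
        (γ • (1 : Matrix (Fin d) (Fin d) ℝ) - D)⁻¹)).PosSemidef ∧
    (∀ S : Matrix (Fin d) (Fin d) ℝ, S.PosSemidef →
      obj γ D Sg S ≤ obj γ D Sg (γ ^ 2 • ((γ • (1 : Matrix (Fin d) (Fin d) ℝ) - D)⁻¹ * Sg *
        (γ • (1 : Matrix (Fin d) (Fin d) ℝ) - D)⁻¹))) ∧
    (∀ S : Matrix (Fin d) (Fin d) ℝ, S.PosSemidef →
      obj γ D Sg S = obj γ D Sg (γ ^ 2 • ((γ • (1 : Matrix (Fin d) (Fin d) ℝ) - D)⁻¹ * Sg *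
        (γ • (1 : Matrix (Fin d) (Fin d) ℝ) - D)⁻¹)) →
      S = γ ^ 2 • ((γ • (1 : Matrix (Fin d) (Fin d) ℝ) - D)⁻¹ * Sg *
        (γ • (1 : Matrix (Fin d) (Fin d) ℝ) - D)⁻¹)) := by
  rcases isEmpty_or_nonempty (Fin d) with hd | hd
  · have hall : ∀ M N : Matrix (Fin d) (Fin d) ℝ, M = N := Subsingleton.elim
    exact ⟨hall 0 (γ ^ 2 • _) ▸ .zero, fun _ _ => (congrArg _ (hall _ _)).le,
      fun _ _ _ => hall _ _⟩
  set A := γ • (1 : Matrix (Fin d) (Fin d) ℝ) - D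
  set R := msqrt Sg
  have hR : R.PosSemidef := posSemidef_msqrt hSg.posSemidef
  have hRu : IsUnit R := isUnit_msqrt hSg
  have hRdet : IsUnit R.det := (isUnit_iff_isUnit_det R).mp hRu
  have hroot := msqrt_conj_mul_inv_mul_inv (pos_of_posDef_smul_one_sub hD hγ).le hγ hR hRdet
  rw [msqrt_mul_self hSg.posSemidef] at hroot
  set B := R⁻¹ * A * R⁻¹
  have hB : B.PosDef := hγ.conj_nonsing_inv hR.1 hRdet
  have hconj (S : Matrix (Fin d) (Fin d) ℝ) (hS : S.PosSemidef) : (R * S * R).PosSemidef :=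
    hS.mul_mul_of_isHermitian hR.1
  have hvalue (S : Matrix (Fin d) (Fin d) ℝ) (hS : S.PosSemidef) : obj γ D Sg S =
      2 * γ * (msqrt (R * S * R)).trace - (B * (msqrt (R * S * R) * msqrt (R * S * R))).trace := by
    rw [obj_eq_two_mul_trace_msqrt_sub hD.1, msqrt_mul_self (hconj S hS),
      ← trace_mul_eq_trace_conj_mul_conj hRdet]
  set Sstar := γ ^ 2 • (A⁻¹ * Sg * A⁻¹)
  have hSstar : Sstar.PosSemidef :=
    (hSg.posSemidef.mul_mul_of_isHermitian hγ.inv.1).smul (sq_nonneg γ)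
  have hmax : obj γ D Sg Sstar = γ ^ 2 * B⁻¹.trace := by
    rw [hvalue Sstar hSstar]
    exact (hB.two_mul_trace_sub_trace_mul_mul_self_eq_iff
      (posSemidef_msqrt (hconj _ hSstar)).1 γ).mpr hroot
  refine ⟨hSstar, fun S hS => ?_, fun S hS heq => ?_⟩
  · rw [hvalue S hS, hmax]
    exact hB.two_mul_trace_sub_trace_mul_mul_self_le (posSemidef_msqrt (hconj S hS)).1 γ
  · rw [hvalue S hS, hmax,
      hB.two_mul_trace_sub_trace_mul_mul_self_eq_iff (posSemidef_msqrt (hconj S hS)).1,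
      ← hroot] at heq
    have hRSR : R * S * R = R * Sstar * R := by
      rw [← msqrt_mul_self (hconj S hS), heq, msqrt_mul_self (hconj _ hSstar)]
    exact hRu.mul_left_cancel (hRu.mul_right_cancel hRSR)

/-- If `γ I − D ≻ 0`, then `S⋆ = γ² (γ I − D)⁻¹ Σ (γ I − D)⁻¹` is the unique maximizer of
`S ↦ ⟨D,S⟩ − γ·Tr(S − 2(Σ^{1/2} S Σ^{1/2})^{1/2})` over symmetric PSD matrices. -/
theorem stmt1 {d : ℕ} (γ : ℝ) (D Sg : Matrix (Fin d) (Fin d) ℝ)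
    (hD : D.PosSemidef) (hD0 : D ≠ 0) (hSg : Sg.PosDef)
    (hγ : (γ • (1 : Matrix (Fin d) (Fin d) ℝ) - D).PosDef) :
    (γ ^ 2 • ((γ • (1 : Matrix (Fin d) (Fin d) ℝ) - D)⁻¹ * Sg *
        (γ • (1 : Matrix (Fin d) (Fin d) ℝ) - D)⁻¹)).PosSemidef ∧
    (∀ S : Matrix (Fin d) (Fin d) ℝ, S.PosSemidef →
      obj γ D Sg S ≤ obj γ D Sg (γ ^ 2 • ((γ • (1 : Matrix (Fin d) (Fin d) ℝ) - D)⁻¹ * Sg *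
        (γ • (1 : Matrix (Fin d) (Fin d) ℝ) - D)⁻¹))) ∧
    (∀ S : Matrix (Fin d) (Fin d) ℝ, S.PosSemidef →
      obj γ D Sg S = obj γ D Sg (γ ^ 2 • ((γ • (1 : Matrix (Fin d) (Fin d) ℝ) - D)⁻¹ * Sg *
        (γ • (1 : Matrix (Fin d) (Fin d) ℝ) - D)⁻¹)) →
      S = γ ^ 2 • ((γ • (1 : Matrix (Fin d) (Fin d) ℝ) - D)⁻¹ * Sg *
        (γ • (1 : Matrix (Fin d) (Fin d) ℝ) - D)⁻¹)) :=
  stmt1_general γ D Sg hD hSg hγ
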